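/- Global safety of shielded perfect-perception MDPs (occupancy form): Let S be a finite state set partitioned into S_Δ, S_U, S_∇, let Ξ ∈ [0,1]^S vanish on S_U, let λ' ∈ [0,1], and let (T_i)_{i=0}^{n'-1} be column-stochastic matrices each satisfying ⟨Ξ, T_i e_s⟩ ≥ λ' for all s ∈ S_Δ. Define d_0 = e_ι for some ι ∈ S_Δ and d_{i+1} = T_i d_i. If ⟨C_{S_∇}, d_i⟩ = 0 for all i ≤ n', then ⟨C_{S\S_U}, d_{n'}⟩ ≥ (λ')^{n'}, equivalently ⟨C_{S_U}, d_{n'}⟩ ≤ 1 − (λ')^{n'}. -/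

import Mathlib

open Matrix BigOperators

def ind {S : Type*} [DecidableEq S] (X : Finset S) : S → ℝ := fun i => if i ∈ X then 1 else 0

/-!
By induction on `i`, the mass `d i` puts on `SΔ` is at least `l ^ i`. One shielded step from a
distribution with mass `m` on `SΔ` yields `⟨Ξ, d (i + 1)⟩ ≥ l * m`. Since `Ξ ≤ 1` and `Ξ` vanishes
on `SU`, this is at most the mass of `d (i + 1)` outside `SU`, which lies on `SΔ` because the
trajectory never reaches `Sstuck`.
-/

section Occupancy

variable {S : Type*} [Fintype S] [DecidableEq S]

lemma ind_dotProduct (X : Finset S) (f : S → ℝ) : ind X ⬝ᵥ f = ∑ j ∈ X, f j := by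
  simp [dotProduct, ind, ite_mul, Finset.sum_ite_mem]

lemma mul_sum_le_dotProduct_mulVec {T : Matrix S S ℝ} {Ξ v : S → ℝ} {A : Finset S} {l : ℝ}
    (hΞ : ∀ j, 0 ≤ Ξ j) (hT : ∀ j k, 0 ≤ T j k) (hv : 0 ≤ v)
    (hshield : ∀ s ∈ A, l ≤ Ξ ⬝ᵥ T *ᵥ Pi.single s 1) :
    l * ∑ s ∈ A, v s ≤ Ξ ⬝ᵥ T *ᵥ v := by
  have hcol : ∀ s, (Ξ ᵥ* T) s = Ξ ⬝ᵥ T *ᵥ Pi.single s 1 := fun s => by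
    rw [mulVec_single_one]; rfl
  have hcol_nonneg : ∀ s, 0 ≤ (Ξ ᵥ* T) s := fun s =>
    Finset.sum_nonneg fun j _ => mul_nonneg (hΞ j) (hT j s)
  rw [dotProduct_mulVec, Finset.mul_sum]
  calc ∑ s ∈ A, l * v s ≤ ∑ s ∈ A, (Ξ ᵥ* T) s * v s :=
        Finset.sum_le_sum fun s hs => mul_le_mul_of_nonneg_right (hcol s ▸ hshield s hs) (hv s)
    _ ≤ ∑ s, (Ξ ᵥ* T) s * v s :=
        Finset.sum_le_sum_of_subset_of_nonneg (Finset.subset_univ A) fun s _ _ =>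
          mul_nonneg (hcol_nonneg s) (hv s)

lemma dotProduct_le_sum_compl {Ξ v : S → ℝ} {U : Finset S}
    (hΞ1 : ∀ j, Ξ j ≤ 1) (hΞU : ∀ j ∈ U, Ξ j = 0) (hv : 0 ≤ v) :
    Ξ ⬝ᵥ v ≤ ∑ j ∈ Uᶜ, v j := by
  rw [dotProduct, ← Finset.sum_add_sum_compl U, Finset.sum_eq_zero fun j hj => by
    rw [hΞU j hj, zero_mul], zero_add]
  exact Finset.sum_le_sum fun j _ => mul_le_of_le_one_left (hv j) (hΞ1 j)

end Occupancy

section Trajectory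

variable {S : Type*} [Fintype S] {T : ℕ → Matrix S S ℝ} {d : ℕ → S → ℝ}

lemma trajectory_nonneg (hdstep : ∀ i, d (i + 1) = T i *ᵥ d i) (hT : ∀ i, ∀ j k, 0 ≤ T i j k)
    (hd0 : 0 ≤ d 0) : ∀ i, 0 ≤ d i
  | 0 => hd0
  | i + 1 => fun j => by
    rw [hdstep]
    exact Finset.sum_nonneg fun k _ => mul_nonneg (hT i j k) (trajectory_nonneg hdstep hT hd0 i k)

lemma sum_trajectory [DecidableEq S] (hdstep : ∀ i, d (i + 1) = T i *ᵥ d i)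
    (hT : ∀ i, T i ∈ colStochastic ℝ S) : ∀ i, ∑ j, d i j = ∑ j, d 0 j
  | 0 => rfl
  | i + 1 => by rw [hdstep, sum_mulVec_of_mem_colStochastic (hT i), sum_trajectory hdstep hT i]

lemma pow_mul_sum_le_sum_trajectory [DecidableEq S] (hdstep : ∀ i, d (i + 1) = T i *ᵥ d i)
    (hT : ∀ i, ∀ j k, 0 ≤ T i j k) (hd : ∀ i, 0 ≤ d i)
    {SΔ SU Sstuck : Finset S} (hcover : SΔ ∪ SU ∪ Sstuck = Finset.univ)
    {Ξ : S → ℝ} (hΞ0 : ∀ j, 0 ≤ Ξ j) (hΞ1 : ∀ j, Ξ j ≤ 1) (hΞU : ∀ j ∈ SU, Ξ j = 0)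
    {l : ℝ} (hl0 : 0 ≤ l) (hshield : ∀ i, ∀ s ∈ SΔ, l ≤ Ξ ⬝ᵥ T i *ᵥ Pi.single s 1)
    {n : ℕ} (hnostuck : ∀ i ≤ n, ∀ j ∈ Sstuck, d i j = 0) :
    ∀ i ≤ n, l ^ i * ∑ j ∈ SΔ, d 0 j ≤ ∑ j ∈ SΔ, d i j := by
  intro i hi
  induction i with
  | zero => simp
  | succ i ih =>
    have hcompl : SUᶜ ⊆ SΔ ∪ Sstuck := fun j hj => by
      have hj' : j ∈ SΔ ∪ SU ∪ Sstuck := hcover ▸ Finset.mem_univ j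
      simp only [Finset.mem_compl, Finset.mem_union] at hj hj' ⊢
      tauto
    calc l ^ (i + 1) * ∑ j ∈ SΔ, d 0 j = l * (l ^ i * ∑ j ∈ SΔ, d 0 j) := by ring
      _ ≤ l * ∑ j ∈ SΔ, d i j := mul_le_mul_of_nonneg_left (ih (by omega)) hl0
      _ ≤ Ξ ⬝ᵥ d (i + 1) := hdstep i ▸ mul_sum_le_dotProduct_mulVec hΞ0 (hT i) (hd i) (hshield i)
      _ ≤ ∑ j ∈ SUᶜ, d (i + 1) j := dotProduct_le_sum_compl hΞ1 hΞU (hd _)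
      _ ≤ ∑ j ∈ SΔ ∪ Sstuck, d (i + 1) j :=
        Finset.sum_le_sum_of_subset_of_nonneg hcompl fun j _ _ => hd _ j
      _ = ∑ j ∈ SΔ, d (i + 1) j :=
        (Finset.sum_subset Finset.subset_union_left fun j hj hjΔ =>
          hnostuck _ hi j ((Finset.mem_union.1 hj).resolve_left hjΔ)).symm

end Trajectory

theorem stmt7_general {S : Type*} [Fintype S] [DecidableEq S]
    (SΔ SU Sstuck : Finset S)
    (hdisj1 : Disjoint SΔ SU)
    (hcover : SΔ ∪ SU ∪ Sstuck = Finset.univ)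
    (Ξ : S → ℝ) (hΞ0 : ∀ i, 0 ≤ Ξ i) (hΞ1 : ∀ i, Ξ i ≤ 1)
    (hΞU : ∀ i ∈ SU, Ξ i = 0)
    (l : ℝ) (hl0 : 0 ≤ l)
    (n' : ℕ) (T : ℕ → Matrix S S ℝ)
    (hTnn : ∀ i, ∀ j k, 0 ≤ T i j k) (hTcol : ∀ i, ∀ k, ∑ j, T i j k = 1)
    (hshield : ∀ i, ∀ s ∈ SΔ, l ≤ ∑ j, Ξ j * (T i).mulVec (Pi.single s 1) j)
    (ι : S) (hι : ι ∈ SΔ)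
    (d : ℕ → S → ℝ) (hd0 : d 0 = Pi.single ι 1)
    (hdstep : ∀ i, d (i + 1) = (T i).mulVec (d i))
    (hnostuck : ∀ i ≤ n', ∑ j, ind Sstuck j * d i j = 0) :
    l ^ n' ≤ ∑ j, ind SUᶜ j * d n' j ∧ ∑ j, ind SU j * d n' j ≤ 1 - l ^ n' := by
  have hd : ∀ i, 0 ≤ d i :=
    trajectory_nonneg hdstep hTnn (hd0 ▸ Pi.single_nonneg.2 zero_le_one)
  have hmass : ∑ j, d n' j = 1 := by
    rw [sum_trajectory hdstep (fun i => mem_colStochastic_iff_sum.2 ⟨hTnn i, hTcol i⟩), hd0]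
    simp
  have hstuck : ∀ i ≤ n', ∀ j ∈ Sstuck, d i j = 0 := fun i hi => by
    have := hnostuck i hi
    rwa [← dotProduct, ind_dotProduct, Finset.sum_eq_zero_iff_of_nonneg fun j _ => hd i j] at this
  have hsafe : l ^ n' ≤ ∑ j ∈ SUᶜ, d n' j := calc
    l ^ n' ≤ ∑ j ∈ SΔ, d n' j := by
      simpa [hd0, hι] using
        pow_mul_sum_le_sum_trajectory hdstep hTnn hd hcover hΞ0 hΞ1 hΞU hl0 hshield hstuck n' le_rfl
    _ ≤ ∑ j ∈ SUᶜ, d n' j := Finset.sum_le_sum_of_subset_of_nonneg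
      (Finset.subset_compl_iff_disjoint_right.2 hdisj1) fun j _ _ => hd n' j
  have hsplit := Finset.sum_add_sum_compl SU (d n')
  rw [← dotProduct, ← dotProduct, ind_dotProduct, ind_dotProduct]
  constructor <;> linarith

/-- global safety of shielded perfect-perception MDPs (occupancy form). -/
theorem stmt7 {S : Type*} [Fintype S] [DecidableEq S]
    (SΔ SU Sstuck : Finset S)
    (hdisj1 : Disjoint SΔ SU) (hdisj2 : Disjoint SΔ Sstuck) (hdisj3 : Disjoint SU Sstuck)
    (hcover : SΔ ∪ SU ∪ Sstuck = Finset.univ)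
    (Ξ : S → ℝ) (hΞ0 : ∀ i, 0 ≤ Ξ i) (hΞ1 : ∀ i, Ξ i ≤ 1)
    (hΞU : ∀ i ∈ SU, Ξ i = 0)
    (l : ℝ) (hl0 : 0 ≤ l) (hl1 : l ≤ 1)
    (n' : ℕ) (T : ℕ → Matrix S S ℝ)
    (hTnn : ∀ i, ∀ j k, 0 ≤ T i j k) (hTcol : ∀ i, ∀ k, ∑ j, T i j k = 1)
    (hshield : ∀ i, ∀ s ∈ SΔ, l ≤ ∑ j, Ξ j * (T i).mulVec (Pi.single s 1) j)
    (ι : S) (hι : ι ∈ SΔ)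
    (d : ℕ → S → ℝ) (hd0 : d 0 = Pi.single ι 1)
    (hdstep : ∀ i, d (i + 1) = (T i).mulVec (d i))
    (hnostuck : ∀ i ≤ n', ∑ j, ind Sstuck j * d i j = 0) :
    l ^ n' ≤ ∑ j, ind SUᶜ j * d n' j ∧ ∑ j, ind SU j * d n' j ≤ 1 - l ^ n' :=
  stmt7_general SΔ SU Sstuck hdisj1 hcover Ξ hΞ0 hΞ1 hΞU l hl0 n' T hTnn hTcol hshield ι hι d hd0
    hdstep hnostuck
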